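/- arXiv:1401.5135 — 3 statements merged into one kernel-verified Lean document; each statement's English description precedes it below -/
import Mathlib

section
/- A morphism of schemes is proper if and only if it is partially proper and quasi-compact, where a morphism f : X → Y is called partially proper if it is separated, locally of finite type, and universally specializing (every base change of f has the property that for each point x of the source and each specialization y' of f(x), there is a specialization x' of x with f(x') = y'). -/
open AlgebraicGeometry CategoryTheory

universe u

/-- A morphism of schemes is *universally specializing* if every base change of it is a
specializing map on underlying topological spaces (specializations lift along it). -/
def UniversallySpecializing : MorphismProperty Scheme.{u} :=
  (AlgebraicGeometry.topologically fun f => SpecializingMap f).universally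

/-- A morphism of schemes is *partially proper* if it is separated, locally of finite type
and universally specializing. -/
def PartiallyProper {X Y : Scheme.{u}} (f : X ⟶ Y) : Prop :=
  IsSeparated f ∧ LocallyOfFiniteType f ∧ UniversallySpecializing f

/-- A morphism of schemes is proper if and only if it is partially proper
and quasi-compact. -/
theorem isProper_iff_partiallyProper_and_quasiCompact
    {X Y : Scheme.{u}} (f : X ⟶ Y) :
    IsProper f ↔ (PartiallyProper f ∧ QuasiCompact f) := by
  have h := congrFun (congrFun (congrFun universallyClosed_eq_universallySpecializing X) Y) f
  constructor
  · intro hf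
    have h1 : UniversallyClosed f := inferInstance
    rw [h] at h1
    exact ⟨⟨inferInstance, inferInstance, h1.1⟩, h1.2⟩
  · rintro ⟨⟨h1, h2, h3⟩, h4⟩
    have : UniversallyClosed f := by rw [h]; exact ⟨h3, h4⟩
    exact ⟨⟩
end

section
/- Let f : X → Y be a partially proper morphism of schemes with Y noetherian. Then for every quasi-compact subset T of X, the closure of T in X is quasi-compact. -/
open AlgebraicGeometry CategoryTheory

universe u

section
open TopologicalSpace Topology

noncomputable section

private def specHom {S : CommRingCat.{u}} {Z : Scheme.{u}} [IsAffine Z]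
    (g : Spec S ⟶ Z) : Γ(Z, ⊤) ⟶ S :=
  g.appTop ≫ (Scheme.ΓSpecIso S).hom

private lemma specHom_spec {S : CommRingCat.{u}} {Z : Scheme.{u}} [IsAffine Z]
    (g : Spec S ⟶ Z) : g = Spec.map (specHom g) ≫ Z.isoSpec.inv := by
  rw [Iso.eq_comp_inv]
  rw [← Scheme.isoSpec_hom_naturality g, Scheme.isoSpec_Spec_hom, ← Spec.map_comp]
  rfl

private lemma specHom_injective {S : CommRingCat.{u}} {Z : Scheme.{u}} [IsAffine Z]
    {g₁ g₂ : Spec S ⟶ Z} (h : specHom g₁ = specHom g₂) : g₁ = g₂ := by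
  rw [specHom_spec g₁, specHom_spec g₂, h]

private lemma specHom_comp {S : CommRingCat.{u}} {Z Z' : Scheme.{u}} [IsAffine Z] [IsAffine Z']
    (g : Spec S ⟶ Z') (h : Z' ⟶ Z) : specHom (g ≫ h) = h.appTop ≫ specHom g := by
  simp [specHom, Scheme.Hom.comp_appTop]; rfl

private lemma specHom_specMap_comp {S S' : CommRingCat.{u}} {Z : Scheme.{u}} [IsAffine Z]
    (φ : S' ⟶ S) (g : Spec S' ⟶ Z) :
    specHom (Spec.map φ ≫ g) = specHom g ≫ φ := by
  simp only [specHom, Scheme.Hom.comp_appTop, Category.assoc]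
  rw [Scheme.ΓSpecIso_naturality]

private lemma isClosed_bool_eq {α : Type*} (k : α) (b : Bool) :
    IsClosed {χ : α → Bool | χ k = b} := by
  have : {χ : α → Bool | χ k = b} = (fun χ : α → Bool => χ k) ⁻¹' {b} := rfl
  rw [this]
  exact (isClosed_discrete {b}).preimage (continuous_apply k)

/-- Compactness of the Zariski–Riemann space, in elementary form: if a family of finite
subsets of `K` "covers" all valuation subrings containing `s` (in the sense that every such
valuation subring contains one of them), then a finite subfamily already covers. -/
private lemma exists_finset_valuationSubring {K : Type u} [Field K] (s : Set K)
    {ι : Type u} (E : ι → Finset K)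
    (h : ∀ R : ValuationSubring K, s ⊆ (R : Set K) → ∃ i, ↑(E i) ⊆ (R : Set K)) :
    ∃ F : Finset ι, ∀ R : ValuationSubring K, s ⊆ (R : Set K) →
      ∃ i ∈ F, ↑(E i) ⊆ (R : Set K) := by
  classical
  by_contra hc
  push_neg at hc
  choose R hRs hRE using hc
  -- indicator functions
  let χ : Finset ι → (K → Bool) := fun F k => decide (k ∈ R F)
  -- the closed set of "valuation subring indicators containing s"
  let V : Set (K → Bool) :=
    {χ | χ 0 = true} ∩ {χ | χ 1 = true} ∩
    (⋂ (a : K) (b : K), {χ | χ a = false} ∪ {χ | χ b = false} ∪ {χ | χ (a + b) = true}) ∩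
    (⋂ (a : K) (b : K), {χ | χ a = false} ∪ {χ | χ b = false} ∪ {χ | χ (a * b) = true}) ∩
    (⋂ (a : K), {χ | χ a = false} ∪ {χ | χ (-a) = true}) ∩
    (⋂ (k : K), {χ | χ k = true} ∪ {χ | χ k⁻¹ = true}) ∩
    (⋂ (a : K) (_ : a ∈ s), {χ | χ a = true})
  have hVclosed : IsClosed V := by
    refine (((((((isClosed_bool_eq _ _).inter (isClosed_bool_eq _ _)).inter ?_).inter ?_).inter
      ?_).inter ?_).inter ?_) <;>
    · refine isClosed_iInter fun _ => ?_
      first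
      | exact isClosed_iInter fun _ =>
          ((isClosed_bool_eq _ _).union (isClosed_bool_eq _ _)).union (isClosed_bool_eq _ _)
      | exact ((isClosed_bool_eq _ _).union (isClosed_bool_eq _ _)).union (isClosed_bool_eq _ _)
      | exact (isClosed_bool_eq _ _).union (isClosed_bool_eq _ _)
      | exact isClosed_iInter fun _ => isClosed_bool_eq _ _
  -- membership of indicators in V
  have hmem : ∀ F, χ F ∈ V := by
    intro F
    refine ⟨⟨⟨⟨⟨⟨?_, ?_⟩, ?_⟩, ?_⟩, ?_⟩, ?_⟩, ?_⟩
    · simpa [χ] using (R F).zero_mem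
    · simpa [χ] using (R F).one_mem
    · refine Set.mem_iInter.2 fun a => Set.mem_iInter.2 fun b => ?_
      by_cases ha : a ∈ R F
      · by_cases hb : b ∈ R F
        · exact Or.inr (by simpa [χ] using (R F).add_mem _ _ ha hb)
        · exact Or.inl (Or.inr (by simpa [χ] using hb))
      · exact Or.inl (Or.inl (by simpa [χ] using ha))
    · refine Set.mem_iInter.2 fun a => Set.mem_iInter.2 fun b => ?_
      by_cases ha : a ∈ R F
      · by_cases hb : b ∈ R F
        · exact Or.inr (by simpa [χ] using (R F).mul_mem _ _ ha hb)
        · exact Or.inl (Or.inr (by simpa [χ] using hb))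
      · exact Or.inl (Or.inl (by simpa [χ] using ha))
    · refine Set.mem_iInter.2 fun a => ?_
      by_cases ha : a ∈ R F
      · exact Or.inr (by simpa [χ] using (R F).neg_mem _ ha)
      · exact Or.inl (by simpa [χ] using ha)
    · refine Set.mem_iInter.2 fun k => ?_
      rcases (R F).mem_or_inv_mem k with hk | hk
      · exact Or.inl (by simpa [χ] using hk)
      · exact Or.inr (by simpa [χ] using hk)
    · refine Set.mem_iInter.2 fun a => Set.mem_iInter.2 fun ha => ?_
      simpa [χ] using hRs F ha
  -- the closed conditions "some element of E i is missing"
  let C : ι → Set (K → Bool) := fun i => ⋃ e ∈ E i, {χ | χ e = false}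
  have hCclosed : ∀ i, IsClosed (C i) :=
    fun i => (E i).finite_toSet.isClosed_biUnion fun e _ => isClosed_bool_eq _ _
  have hfin : ∀ F : Finset ι, (V ∩ ⋂ i ∈ F, C i).Nonempty := by
    intro F
    refine ⟨χ F, hmem F, Set.mem_iInter₂.2 fun i hi => ?_⟩
    obtain ⟨e, he, hne⟩ := Set.not_subset.1 (hRE F i hi)
    exact Set.mem_iUnion₂.2 ⟨e, he, by simpa [χ] using hne⟩
  obtain ⟨χ₀, hχV, hχC⟩ := hVclosed.isCompact.inter_iInter_nonempty C hCclosed hfin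
  obtain ⟨⟨⟨⟨⟨⟨h0, h1⟩, hadd⟩, hmul⟩, hneg⟩, hinv⟩, hs⟩ := hχV
  -- build the valuation subring
  let R₀ : ValuationSubring K :=
  { carrier := {k | χ₀ k = true}
    zero_mem' := h0
    one_mem' := h1
    add_mem' := fun {a} {b} ha hb => by
      have := Set.mem_iInter.1 (Set.mem_iInter.1 hadd a) b
      rcases this with (h | h) | h
      · exact absurd ha (by simpa using h)
      · exact absurd hb (by simpa using h)
      · exact h
    mul_mem' := fun {a} {b} ha hb => by
      have := Set.mem_iInter.1 (Set.mem_iInter.1 hmul a) b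
      rcases this with (h | h) | h
      · exact absurd ha (by simpa using h)
      · exact absurd hb (by simpa using h)
      · exact h
    neg_mem' := fun {a} ha => by
      have := Set.mem_iInter.1 hneg a
      rcases this with h | h
      · exact absurd ha (by simpa using h)
      · exact h
    mem_or_inv_mem' := fun k => Set.mem_iInter.1 hinv k }
  have hR₀s : s ⊆ (R₀ : Set K) := fun a ha =>
    Set.mem_iInter.1 (Set.mem_iInter.1 hs a) ha
  obtain ⟨i, hEi⟩ := h R₀ hR₀s
  have := Set.mem_iInter.1 hχC i
  obtain ⟨e, he, hfalse⟩ := Set.mem_iUnion₂.1 this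
  have : χ₀ e = true := hEi he
  simp [this] at hfalse


private lemma scheme_comp_base_apply {X Y Z : Scheme.{u}} (f : X ⟶ Y) (g : Y ⟶ Z) (x : X) :
    (f ≫ g).base x = g.base (f.base x) := rfl

/-- Core lemma: over an affine base, the closure of a point is quasi-compact. -/
private lemma aux_core {X Y : Scheme.{u}} (f : X ⟶ Y) [IsAffine Y]
    [IsSeparated f] [LocallyOfFiniteType f]
    (hus : (topologically @SpecializingMap).universally f) (x : X) :
    IsCompact (closure {x} : Set X) := by
  classical
  have hex : ValuativeCriterion.Existence f :=
    ValuativeCriterion.Existence.of_specializingMap f hus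
  have huniq : ValuativeCriterion.Uniqueness f := IsSeparated.valuativeCriterion f
  set i₁ : Spec (X.residueField x) ⟶ X := X.fromSpecResidueField x with hi₁def
  -- choose an affine chart at every point of the closure; it automatically contains `x`
  have hchart : ∀ z : closure ({x} : Set X), ∃ W : X.Opens, IsAffineOpen W ∧ z.1 ∈ W := by
    intro z
    obtain ⟨_, ⟨W, hW, rfl⟩, hzW, -⟩ :=
      X.isBasis_affineOpens.exists_subset_of_mem_open (Set.mem_univ z.1) isOpen_univ
    exact ⟨W, hW, hzW⟩
  choose W hWaff hzW using hchart
  haveI : ∀ z, IsAffine (W z).toScheme := hWaff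
  have hxW : ∀ z, x ∈ W z := fun z =>
    (specializes_iff_mem_closure.2 z.2).mem_open (W z).isOpen (hzW z)
  have hrange : ∀ z, Set.range i₁.base ⊆ Set.range (W z).ι.base := fun z => by
    rw [hi₁def, Scheme.range_fromSpecResidueField, Scheme.Opens.range_ι]
    exact Set.singleton_subset_iff.2 (hxW z)
  -- canonical morphisms and ring maps
  let i₁' : ∀ z, Spec (X.residueField x) ⟶ (W z).toScheme := fun z =>
    IsOpenImmersion.lift (W z).ι i₁ (hrange z)
  let lam : ∀ z, Γ((W z).toScheme, ⊤) ⟶ X.residueField x := fun z => specHom (i₁' z)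
  let sHom : Γ(Y, ⊤) ⟶ X.residueField x := specHom (i₁ ≫ f)
  let del : ∀ z, Γ(Y, ⊤) ⟶ Γ((W z).toScheme, ⊤) := fun z => ((W z).ι ≫ f).appTop
  have hlink : ∀ z, del z ≫ lam z = sHom := by
    intro z
    have h1 : i₁' z ≫ ((W z).ι ≫ f) = i₁ ≫ f := by
      rw [← Category.assoc, IsOpenImmersion.lift_fac]
    rw [show sHom = specHom (i₁ ≫ f) from rfl, ← h1, specHom_comp]
  -- finite generation of the charts
  have hft : ∀ z, RingHom.FiniteType (del z).hom := by
    intro z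
    have h1 : LocallyOfFiniteType ((W z).ι ≫ f) := inferInstance
    have h2 := HasRingHomProperty.appLE @LocallyOfFiniteType ((W z).ι ≫ f) h1
      ⟨⊤, isAffineOpen_top Y⟩ ⟨⊤, isAffineOpen_top (W z).toScheme⟩ le_rfl
    have h3 : ((W z).ι ≫ f).appLE ⊤ ⊤ le_rfl = ((W z).ι ≫ f).appTop :=
      Scheme.Hom.appLE_eq_app ((W z).ι ≫ f) (U := ⊤)
    rwa [h3] at h2
  choose gens hgens using fun z => (hft z).1
  let E : ∀ _ : closure ({x} : Set X), Finset (X.residueField x) := fun z =>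
    (gens z).image (lam z)
  -- Claim 1: every valuation subring containing the image of Γ(Y) contains some chart algebra
  have claim1 : ∀ R : ValuationSubring (X.residueField x),
      Set.range sHom ⊆ (R : Set (X.residueField x)) →
      ∃ z : closure ({x} : Set X), ↑(E z) ⊆ (R : Set (X.residueField x)) := by
    intro R hsR
    let rho : Γ(Y, ⊤) ⟶ CommRingCat.of R :=
      CommRingCat.ofHom (sHom.hom.codRestrict R.toSubring fun a => hsR ⟨a, rfl⟩)
    let i₂ : Spec (CommRingCat.of R) ⟶ Y := Spec.map rho ≫ Y.isoSpec.inv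
    have hrs : rho ≫ CommRingCat.ofHom (algebraMap R (X.residueField x)) = sHom :=
      CommRingCat.hom_ext (RingHom.ext fun a => rfl)
    have w : i₁ ≫ f =
        Spec.map (CommRingCat.ofHom (algebraMap R (X.residueField x))) ≫ i₂ := by
      rw [specHom_spec (i₁ ≫ f), show i₂ = Spec.map rho ≫ Y.isoSpec.inv from rfl,
        ← Spec.map_comp_assoc, hrs]
    let sq : ValuativeCommSq f :=
      { R := R
        K := X.residueField x
        i₁ := i₁
        i₂ := i₂
        commSq := ⟨w⟩ }
    obtain ⟨l⟩ := (hex sq).exists_lift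
    haveI : IsLocalRing (X.residueField x) := inferInstance
    haveI : IsLocalRing R := inferInstance
    haveI : IsLocalRing ↑(CommRingCat.of sq.R) := inferInstanceAs (IsLocalRing R)
    haveI : IsLocalRing ↑(CommRingCat.of (X.residueField x)) :=
      inferInstanceAs (IsLocalRing (X.residueField x))
    have hxz : x ⤳ l.l.base (IsLocalRing.closedPoint R) := by
      have h1 := IsLocalRing.specializes_closedPoint
        (R := R) ((Spec.map (CommRingCat.ofHom (algebraMap R (X.residueField x)))).base
          (IsLocalRing.closedPoint (X.residueField x)))
      have h2 := h1.map l.l.base.hom.continuous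
      have h2' : (Spec.map (CommRingCat.ofHom (algebraMap R (X.residueField x))) ≫ l.l).base
          (IsLocalRing.closedPoint (X.residueField x)) ⤳ l.l.base (IsLocalRing.closedPoint R) := h2
      rw [l.fac_left] at h2'
      have h3 : (X.fromSpecResidueField x).base (IsLocalRing.closedPoint (X.residueField x)) ⤳
          l.l.base (IsLocalRing.closedPoint R) := h2'
      convert h3 using 1; exact (Scheme.fromSpecResidueField_apply x _).symm
    have hzc : l.l.base (IsLocalRing.closedPoint R) ∈ closure ({x} : Set X) :=
      specializes_iff_mem_closure.1 hxz
    refine ⟨⟨_, hzc⟩, ?_⟩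
    set zc : closure ({x} : Set X) := ⟨_, hzc⟩ with hzcdef
    have hlr : Set.range l.l.base ⊆ Set.range (W zc).ι.base := by
      rw [Scheme.Opens.range_ι]
      rintro _ ⟨p, rfl⟩
      exact ((IsLocalRing.specializes_closedPoint p).map l.l.base.hom.continuous).mem_open
        (W zc).isOpen (hzW zc)
    have hl' : IsOpenImmersion.lift (W zc).ι l.l hlr ≫ (W zc).ι = l.l :=
      IsOpenImmersion.lift_fac _ _ hlr
    have hi₁fac : i₁' zc ≫ (W zc).ι = i₁ := IsOpenImmersion.lift_fac _ _ (hrange zc)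
    have hresc : Spec.map (CommRingCat.ofHom (algebraMap R (X.residueField x))) ≫
        IsOpenImmersion.lift (W zc).ι l.l hlr = i₁' zc := by
      rw [← cancel_mono (W zc).ι, Category.assoc, hl', hi₁fac, l.fac_left]
    have hkey : lam zc = specHom (IsOpenImmersion.lift (W zc).ι l.l hlr) ≫
        CommRingCat.ofHom (algebraMap R (X.residueField x)) := by
      rw [show lam zc = specHom (i₁' zc) from rfl, ← hresc, specHom_specMap_comp]
    intro k hk
    obtain ⟨d, hd, rfl⟩ := Finset.mem_image.1 (Finset.mem_coe.1 hk)
    have : lam zc d = algebraMap R (X.residueField x)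
        (specHom (IsOpenImmersion.lift (W zc).ι l.l hlr) d) := by rw [hkey]; rfl
    rw [this, ValuationSubring.algebraMap_apply]
    exact SetLike.coe_mem _
  -- Claim 2: finitely many charts suffice for all valuation subrings
  obtain ⟨F, hFfin⟩ := exists_finset_valuationSubring (Set.range sHom) E claim1
  -- Claim 3: the closure is covered by the finitely many charts
  have claim3 : closure ({x} : Set X) ⊆ ⋃ z ∈ F, ((W z : X.Opens) : Set X) := by
    intro z0 hz0
    have hsp : x ⤳ z0 := specializes_iff_mem_closure.2 hz0
    let gz : X.presheaf.stalk z0 ⟶ X.residueField x :=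
      X.presheaf.stalkSpecializes hsp ≫ X.residue x
    obtain ⟨R, hR, hRloc⟩ := IsLocalRing.exists_factor_valuationRing gz.hom
    have hi₁z : i₁ = Spec.map gz ≫ X.fromSpecStalk z0 := by
      rw [hi₁def, Scheme.fromSpecResidueField,
        ← Scheme.SpecMap_stalkSpecializes_fromSpecStalk hsp, ← Spec.map_comp_assoc]
    have hsR : Set.range sHom ⊆ (R : Set (X.residueField x)) := by
      rintro _ ⟨a, rfl⟩
      have : sHom = specHom (X.fromSpecStalk z0 ≫ f) ≫ gz := by
        rw [show sHom = specHom (i₁ ≫ f) from rfl, hi₁z, Category.assoc,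
          specHom_specMap_comp]
      rw [this]
      exact hR _
    obtain ⟨zc, hzF, hE⟩ := hFfin R hsR
    haveI : IsLocalRing (X.residueField x) := inferInstance
    haveI : IsLocalRing R := inferInstance
    haveI : IsLocalRing ↑(CommRingCat.of R) := inferInstanceAs (IsLocalRing R)
    letI alg : Algebra Γ(Y, ⊤) Γ((W zc).toScheme, ⊤) := (del zc).hom.toAlgebra
    have hall : ∀ d : Γ((W zc).toScheme, ⊤), lam zc d ∈ R := by
      intro d
      have hd : d ∈ Algebra.adjoin Γ(Y, ⊤) (↑(gens zc) : Set Γ((W zc).toScheme, ⊤)) := by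
        rw [hgens zc]; trivial
      induction hd using Algebra.adjoin_induction with
      | mem y hy => exact hE (Finset.mem_coe.2 (Finset.mem_image_of_mem _ hy))
      | algebraMap a =>
        have : lam zc ((del zc) a) ∈ R := by
          have := congrArg (fun (g : Γ(Y, ⊤) ⟶ X.residueField x) => g a) (hlink zc)
          simp only at this
          rw [show lam zc (del zc a) = (del zc ≫ lam zc) a from rfl, this]
          exact hsR ⟨a, rfl⟩
        exact this
      | add u v hu hv ihu ihv => rw [map_add]; exact R.add_mem _ _ ihu ihv
      | mul u v hu hv ihu ihv => rw [map_mul]; exact R.mul_mem _ _ ihu ihv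
    let phi1 : X.presheaf.stalk z0 ⟶ CommRingCat.of R :=
      CommRingCat.ofHom (gz.hom.codRestrict R.toSubring hR)
    haveI : IsLocalHom phi1.hom := hRloc
    let h1 : Spec (CommRingCat.of R) ⟶ X := Spec.map phi1 ≫ X.fromSpecStalk z0
    let h2 : Spec (CommRingCat.of R) ⟶ X :=
      Spec.map (CommRingCat.ofHom (lam zc |>.hom.codRestrict R.toSubring hall)) ≫
        (W zc).toScheme.isoSpec.inv ≫ (W zc).ι
    have hc1 : phi1 ≫ CommRingCat.ofHom (algebraMap R (X.residueField x)) = gz :=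
      CommRingCat.hom_ext (RingHom.ext fun a => rfl)
    have hc2 : CommRingCat.ofHom (lam zc |>.hom.codRestrict R.toSubring hall) ≫
        CommRingCat.ofHom (algebraMap R (X.residueField x)) = lam zc :=
      CommRingCat.hom_ext (RingHom.ext fun a => rfl)
    have hi₁fac : i₁' zc ≫ (W zc).ι = i₁ := IsOpenImmersion.lift_fac _ _ (hrange zc)
    have r1 : Spec.map (CommRingCat.ofHom (algebraMap R (X.residueField x))) ≫ h1 = i₁ := by
      rw [show h1 = Spec.map phi1 ≫ X.fromSpecStalk z0 from rfl, ← Category.assoc,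
        ← Spec.map_comp, hc1, ← hi₁z]
    have r2 : Spec.map (CommRingCat.ofHom (algebraMap R (X.residueField x))) ≫ h2 = i₁ := by
      rw [show h2 = _ from rfl, ← Spec.map_comp_assoc, hc2,
        show lam zc = specHom (i₁' zc) from rfl, ← Category.assoc, ← specHom_spec (i₁' zc),
        hi₁fac]
    have hinj : Function.Injective (algebraMap R (X.residueField x)) := fun a b hab =>
      Subtype.ext (by simpa [ValuationSubring.algebraMap_apply] using hab)
    have hff : h2 ≫ f = h1 ≫ f := by
      apply specHom_injective
      have e1 : specHom (h2 ≫ f) ≫ CommRingCat.ofHom (algebraMap R (X.residueField x)) =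
          specHom (h1 ≫ f) ≫ CommRingCat.ofHom (algebraMap R (X.residueField x)) := by
        rw [← specHom_specMap_comp, ← specHom_specMap_comp, ← Category.assoc, r2,
          ← Category.assoc, r1]
      exact CommRingCat.hom_ext (RingHom.ext fun a => hinj (RingHom.congr_fun (congrArg CommRingCat.Hom.hom e1) a))
    have w3 : i₁ ≫ f =
        Spec.map (CommRingCat.ofHom (algebraMap R (X.residueField x))) ≫ (h1 ≫ f) := by
      rw [← Category.assoc, r1]
    let sq3 : ValuativeCommSq f :=
      { R := R
        K := X.residueField x
        i₁ := i₁
        i₂ := h1 ≫ f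
        commSq := ⟨w3⟩ }
    haveI := huniq sq3
    have hl12 : h1 = h2 :=
      congrArg CommSq.LiftStruct.l (Subsingleton.elim
        (⟨h1, r1, rfl⟩ : CommSq.LiftStruct _) (⟨h2, r2, hff⟩ : CommSq.LiftStruct _))
    have hz1 : h1.base (IsLocalRing.closedPoint R) = z0 := by
      rw [show h1 = Spec.map phi1 ≫ X.fromSpecStalk z0 from rfl]
      show (X.fromSpecStalk z0).base ((Spec.map phi1).base (IsLocalRing.closedPoint R)) = z0
      have : (Spec.map phi1).base (IsLocalRing.closedPoint R) =
          IsLocalRing.closedPoint (X.presheaf.stalk z0) :=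
        IsLocalRing.comap_closedPoint phi1.hom
      rw [this, Scheme.fromSpecStalk_closedPoint]
    have hmem2 : z0 ∈ ((W zc : X.Opens) : Set X) := by
      rw [← hz1, hl12, ← Scheme.Opens.range_ι]
      exact ⟨((W zc).toScheme.isoSpec.inv).base ((Spec.map (CommRingCat.ofHom
        (lam zc |>.hom.codRestrict R.toSubring hall))).base (IsLocalRing.closedPoint R)), rfl⟩
    exact Set.mem_biUnion hzF hmem2
  exact (F.finite_toSet.isCompact_biUnion fun z _ => (hWaff z).isCompact).of_isClosed_subset
    isClosed_closure claim3

/-- Point case over a compact base: the closure of a point is quasi-compact. -/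
private lemma aux_point {X Y : Scheme.{u}} (f : X ⟶ Y)
    (hsep : IsSeparated f) (hlft : LocallyOfFiniteType f)
    (hus : (topologically @SpecializingMap).universally f)
    [CompactSpace Y] (x : X) : IsCompact (closure {x} : Set X) := by
  classical
  haveI := hsep; haveI := hlft
  have hVy : ∀ y : Y, ∃ V : Y.Opens, IsAffineOpen V ∧ y ∈ V := fun y => by
    obtain ⟨_, ⟨V, hV, rfl⟩, hyV, -⟩ :=
      Y.isBasis_affineOpens.exists_subset_of_mem_open (Set.mem_univ y) isOpen_univ
    exact ⟨V, hV, hyV⟩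
  choose V hVaff hyV using hVy
  obtain ⟨t, ht⟩ := isCompact_univ.elim_finite_subcover
    (fun y : Y => ((V y : Y.Opens) : Set Y)) (fun y => (V y).isOpen)
    (fun y _ => Set.mem_iUnion.2 ⟨y, hyV y⟩)
  have piece : ∀ y : Y, IsCompact (closure {x} ∩ ((f ⁻¹ᵁ V y : X.Opens) : Set X)) := by
    intro y
    by_cases hx : x ∈ f ⁻¹ᵁ V y
    · haveI : IsAffine (V y).toScheme := hVaff y
      haveI h1 : IsSeparated (f ∣_ V y) := IsZariskiLocalAtTarget.restrict hsep (V y)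
      haveI h2 : LocallyOfFiniteType (f ∣_ V y) := inferInstance
      have h3 : (topologically @SpecializingMap).universally (f ∣_ V y) :=
        MorphismProperty.of_isPullback (isPullback_morphismRestrict f (V y)).flip hus
      have hc := aux_core (f ∣_ V y) h3 ⟨x, hx⟩
      set U : X.Opens := f ⁻¹ᵁ V y
      have hind : Topology.IsInducing U.ι.base := U.ι.isOpenEmbedding.toIsInducing
      have himg := hc.image U.ι.continuous
      have heq : U.ι.base '' closure {(⟨x, hx⟩ : U.toScheme)} = closure {x} ∩ (U : Set X) := by
        ext w
        constructor
        · rintro ⟨w', hw', rfl⟩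
          have hsp : (⟨x, hx⟩ : U.toScheme) ⤳ w' := specializes_iff_mem_closure.2 hw'
          have : x ⤳ U.ι.base w' := by
            have := hind.specializes_iff.2 hsp
            simpa using this
          exact ⟨specializes_iff_mem_closure.1 this,
            (Scheme.Opens.range_ι U) ▸ Set.mem_range_self w'⟩
        · rintro ⟨hw1, hw2⟩
          refine ⟨⟨w, hw2⟩, ?_, rfl⟩
          have hsp : x ⤳ w := specializes_iff_mem_closure.2 hw1
          have : U.ι.base ⟨x, hx⟩ ⤳ U.ι.base ⟨w, hw2⟩ := by simpa using hsp
          exact specializes_iff_mem_closure.1 (hind.specializes_iff.1 this)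
      convert himg using 1; exact heq.symm
    · convert isCompact_empty
      rw [Set.eq_empty_iff_forall_notMem]
      rintro w ⟨hw1, hw2⟩
      exact hx ((specializes_iff_mem_closure.2 hw1).mem_open (f ⁻¹ᵁ V y).isOpen hw2)
  have hcover : closure ({x} : Set X) =
      ⋃ y ∈ t, (closure {x} ∩ ((f ⁻¹ᵁ V y : X.Opens) : Set X)) := by
    ext w
    constructor
    · intro hw
      obtain ⟨y, hyt, hy⟩ := Set.mem_iUnion₂.1 (ht (Set.mem_univ (f.base w)))
      exact Set.mem_biUnion hyt ⟨hw, hy⟩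
    · intro hw
      obtain ⟨y, _, hy⟩ := Set.mem_iUnion₂.1 hw
      exact hy.1
  rw [hcover]
  exact t.finite_toSet.isCompact_biUnion fun y _ => piece y
private theorem aux_main
    {X Y : Scheme.{u}} (f : X ⟶ Y)
    (hsep : IsSeparated f) (hlft : LocallyOfFiniteType f)
    (hus' : (topologically @SpecializingMap).universally f) [IsNoetherian Y]
    (T : Set X) (hT : IsCompact T) : IsCompact (closure T) := by
  classical
  haveI : CompactSpace Y := inferInstance
  have hW : ∀ p : X, ∃ W : X.Opens, p ∈ W ∧ NoetherianSpace ((W : Set X)) := by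
    intro p
    obtain ⟨_, ⟨V, hVaff, rfl⟩, hfp, -⟩ :=
      Y.isBasis_affineOpens.exists_subset_of_mem_open (Set.mem_univ (f.base p)) isOpen_univ
    obtain ⟨_, ⟨W', hWaff, rfl⟩, hpW, hWV⟩ :=
      X.isBasis_affineOpens.exists_subset_of_mem_open
        (show p ∈ f ⁻¹ᵁ V from hfp) (f ⁻¹ᵁ V).isOpen
    let W : X.Opens := W'
    have hWaff : IsAffineOpen W := hWaff
    have hft : RingHom.FiniteType (f.appLE V W hWV).hom :=
      HasRingHomProperty.appLE @LocallyOfFiniteType f hlft ⟨V, hVaff⟩ ⟨W, hWaff⟩ hWV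
    letI := (f.appLE V W hWV).hom.toAlgebra
    haveI : Algebra.FiniteType Γ(Y, V) Γ(X, W) := hft
    haveI : IsNoetherianRing Γ(Y, V) := IsLocallyNoetherian.component_noetherian ⟨V, hVaff⟩
    haveI : IsNoetherianRing Γ(X, W) := Algebra.FiniteType.isNoetherianRing Γ(Y, V) Γ(X, W)
    haveI := noetherianSpace_of_isAffineOpen W hWaff
    refine ⟨W, hpW, ?_⟩
    have hmem : ∀ q : W.toScheme, W.ι.base q ∈ ((W : X.Opens) : Set X) := fun q => by
      rw [← Scheme.Opens.range_ι]; exact ⟨q, rfl⟩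
    refine noetherianSpace_of_surjective
      (fun q : W.toScheme => (⟨W.ι.base q, hmem q⟩ : ((W : X.Opens) : Set X)))
      (Continuous.subtype_mk W.ι.base.hom.continuous hmem) ?_
    rintro ⟨w, hw⟩
    rw [← Scheme.Opens.range_ι] at hw
    obtain ⟨q, hq⟩ := hw
    exact ⟨q, Subtype.ext hq⟩
  choose W hpW hWnoe using hW
  obtain ⟨s, hsc⟩ := hT.elim_finite_subcover (fun p => ((W p : X.Opens) : Set X))
    (fun p => (W p).isOpen) (fun p hp => Set.mem_iUnion.2 ⟨p, hpW p⟩)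
  set Us : Set X := ⋃ p ∈ s, ((W p : X.Opens) : Set X) with hUs
  haveI : ∀ p : ↥s, NoetherianSpace ((W (p : X) : X.Opens) : Set X) := fun p => hWnoe p
  haveI hUn : NoetherianSpace ↥Us := by
    have he : Us = ⋃ p : ↥s, ((W (p : X) : X.Opens) : Set X) := by
      ext w
      simp [hUs, Set.mem_iUnion]
    rw [he]
    exact NoetherianSpace.iUnion _
  set S : Set X := closure T ∩ Us with hS
  have hTS : T ⊆ S := fun a ha => ⟨subset_closure ha, hsc ha⟩
  have hclTS : closure T = closure S := le_antisymm (closure_mono hTS)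
    (by
      have : closure S ⊆ closure (closure T) :=
        closure_mono Set.inter_subset_left
      rwa [closure_closure] at this)
  haveI : NoetherianSpace ↥S := by
    have hSU : S ⊆ Us := Set.inter_subset_right
    exact (Topology.IsInducing.of_comp (continuous_inclusion hSU) continuous_subtype_val
      Topology.IsInducing.subtypeVal).noetherianSpace
  have hfinC := NoetherianSpace.finite_irreducibleComponents (α := ↥S)
  have hgen : ∀ C ∈ irreducibleComponents ↥S, ∃ ξ : X,
      closure (Subtype.val '' C) = closure ({ξ} : Set X) := by
    intro C hC
    have hCirr : IsIrreducible C := hC.1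
    have hirr : IsIrreducible (closure (Subtype.val '' C)) :=
      (hCirr.image _ continuous_subtype_val.continuousOn).closure
    obtain ⟨ξ, hξ⟩ := QuasiSober.sober hirr isClosed_closure
    exact ⟨ξ, hξ.symm⟩
  have hdecomp : closure T = ⋃ C ∈ irreducibleComponents ↥S, closure (Subtype.val '' C) := by
    rw [hclTS]
    have h1 : S = ⋃ C ∈ irreducibleComponents ↥S, Subtype.val '' C := by
      apply Set.Subset.antisymm
      · intro w hw
        exact Set.mem_biUnion (irreducibleComponent_mem_irreducibleComponents (⟨w, hw⟩ : ↥S))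
          ⟨⟨w, hw⟩, mem_irreducibleComponent, rfl⟩
      · intro w hw
        obtain ⟨C, hC, w', _, rfl⟩ := Set.mem_iUnion₂.1 hw
        exact w'.2
    conv_lhs => rw [h1]
    exact hfinC.closure_biUnion _
  rw [hdecomp]
  refine hfinC.isCompact_biUnion fun C hC => ?_
  obtain ⟨ξ, hξ⟩ := hgen C hC
  rw [hξ]
  exact aux_point f hsep hlft hus' ξ

end

/-- Let `f : X → Y` be a partially proper morphism of schemes with `Y`
noetherian.  Then the closure of every quasi-compact subset `T` of `X` is quasi-compact. -/
theorem closure_isCompact_of_partiallyProper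
    {X Y : Scheme.{u}} (f : X ⟶ Y) (hf : PartiallyProper f) [IsNoetherian Y]
    (T : Set X) (hT : IsCompact T) : IsCompact (closure T) := by
  obtain ⟨hsep, hlft, hus⟩ := hf
  exact aux_main f hsep hlft hus T hT
end
end

section
/- Let k be a field and X a scheme which is partially proper over k. For an abelian étale sheaf 𝓕 on X, let Γ_c(X,𝓕) denote the subgroup of global sections whose support is quasi-compact, and H^i_c(X,−) the derived functors of Γ_c(X,−). Then H^i_c(X,𝓕) is naturally isomorphic to the filtered colimit over quasi-compact closed subsets Y of X of the cohomology with supports H^i_Y(X,𝓕). -/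
open CategoryTheory CategoryTheory.Limits AlgebraicGeometry

universe v w u

/-- The closed subsets of (the underlying space of) a scheme `X`. -/
abbrev ClosedSubset (X : Scheme.{u}) : Type u := {Z : Set X // IsClosed Z}

/-- The poset of quasi-compact closed subsets of `X`, ordered by inclusion. -/
abbrev QCClosed (X : Scheme.{u}) : Type u := {Z : Set X // IsClosed Z ∧ IsCompact Z}

/-- Forget quasi-compactness. -/
noncomputable def QCClosed.toClosed {X : Scheme.{u}} (Z : QCClosed X) : ClosedSubset X :=
  ⟨Z.1, Z.2.1⟩

section

variable {X : Scheme.{u}}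
  -- `Sh` plays the role of the category of abelian étale sheaves on `X`.
  {Sh : Type w} [Category.{v} Sh] [Abelian Sh] [EnoughInjectives Sh]
  -- sections with support in a closed subset `Z`: `Γ_Z(X,-)`
  (Γsupp : ClosedSubset X → Sh ⥤ AddCommGrpCat.{u})
  -- sections with quasi-compact (equivalently proper) support: `Γ_c(X,-)`
  (Γc : Sh ⥤ AddCommGrpCat.{u})
  -- push-forward maps `Γ_Z → Γ_{Z'}` for `Z ⊆ Z'`
  (push : ∀ {Z Z' : ClosedSubset X}, Z.1 ⊆ Z'.1 → (Γsupp Z ⟶ Γsupp Z'))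
  -- the inclusion `Γ_Z(X,-) ⊆ Γ_c(X,-)` for quasi-compact closed `Z`
  (ι : ∀ Z : QCClosed X, Γsupp Z.toClosed ⟶ Γc)

variable (push_id : ∀ Z : ClosedSubset X, push (subset_refl Z.1) = 𝟙 (Γsupp Z))
  (push_comp : ∀ {Z Z' Z'' : ClosedSubset X} (h : Z.1 ⊆ Z'.1) (h' : Z'.1 ⊆ Z''.1),
    push h ≫ push h' = push (h.trans h'))
  (ι_nat : ∀ {Z Z' : QCClosed X} (h : Z.1 ⊆ Z'.1),
    push h ≫ ι Z' = ι Z)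

/-- The diagram `Z ↦ Γ_Z(X,F)` over the poset of quasi-compact closed subsets. -/
noncomputable def sectionsDiagram (F : Sh) : QCClosed X ⥤ AddCommGrpCat.{u} where
  obj Z := (Γsupp Z.toClosed).obj F
  map {Z Z'} h := ((push (leOfHom h : Z.1 ⊆ Z'.1)).app F)
  map_id Z := by
    show (push (Z := Z.toClosed) (Z' := Z.toClosed) (leOfHom (𝟙 Z) : Z.1 ⊆ Z.1)).app F = _
    rw [push_id Z.toClosed]; rfl
  map_comp {Z Z' Z''} h h' := by
    show (push (Z := Z.toClosed) (Z' := Z''.toClosed) (leOfHom (h ≫ h') : Z.1 ⊆ Z''.1)).app F = (push (Z := Z.toClosed) (Z' := Z'.toClosed) (leOfHom h : Z.1 ⊆ Z'.1)).app F ≫ (push (Z := Z'.toClosed) (Z' := Z''.toClosed) (leOfHom h' : Z'.1 ⊆ Z''.1)).app F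
    rw [← NatTrans.comp_app]
    exact congrArg (fun α => NatTrans.app α F) (push_comp _ _).symm

/-- The cocone over `sectionsDiagram` with vertex `Γ_c(X,F)`. -/
noncomputable def sectionsCocone (F : Sh) : Cocone (sectionsDiagram Γsupp push push_id push_comp F) where
  pt := Γc.obj F
  ι :=
    { app := fun Z => (ι Z).app F
      naturality := fun Z Z' h => by
        dsimp [sectionsDiagram]
        rw [← NatTrans.comp_app, ι_nat (leOfHom h : Z.1 ⊆ Z'.1), Category.comp_id] }

variable [∀ Z : ClosedSubset X, (Γsupp Z).Additive] [Γc.Additive]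

/-- The diagram `Z ↦ H^i_Z(X,F)` of cohomology with supports, as right derived functors of
the sections-with-support functors. -/
noncomputable def derivedDiagram (i : ℕ) (F : Sh) : QCClosed X ⥤ AddCommGrpCat.{u} where
  obj Z := ((Γsupp Z.toClosed).rightDerived i).obj F
  map {Z Z'} h := (NatTrans.rightDerived (push (leOfHom h : Z.1 ⊆ Z'.1)) i).app F
  map_id Z := by
    show (NatTrans.rightDerived (push (Z := Z.toClosed) (Z' := Z.toClosed) (leOfHom (𝟙 Z) : Z.1 ⊆ Z.1)) i).app F = _
    rw [push_id Z.toClosed, NatTrans.rightDerived_id]; rfl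
  map_comp {Z Z' Z''} h h' := by
    show (NatTrans.rightDerived (push (Z := Z.toClosed) (Z' := Z''.toClosed) (leOfHom (h ≫ h') : Z.1 ⊆ Z''.1)) i).app F = (NatTrans.rightDerived (push (Z := Z.toClosed) (Z' := Z'.toClosed) (leOfHom h : Z.1 ⊆ Z'.1)) i).app F ≫ (NatTrans.rightDerived (push (Z := Z'.toClosed) (Z' := Z''.toClosed) (leOfHom h' : Z'.1 ⊆ Z''.1)) i).app F
    rw [← NatTrans.comp_app, ← NatTrans.rightDerived_comp]
    exact congrArg (fun α => (NatTrans.rightDerived α i).app F) (push_comp _ _).symm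

/-- The cocone over `derivedDiagram` with vertex `H^i_c(X,F)`, the `i`-th right derived
functor of `Γ_c(X,-)` applied to `F`. -/
noncomputable def derivedCocone (i : ℕ) (F : Sh) :
    Cocone (derivedDiagram Γsupp push push_id push_comp i F) where
  pt := (Γc.rightDerived i).obj F
  ι :=
    { app := fun Z => (NatTrans.rightDerived (ι Z) i).app F
      naturality := fun Z Z' h => by
        dsimp [derivedDiagram]
        rw [← NatTrans.comp_app, ← NatTrans.rightDerived_comp,
          ι_nat (leOfHom h : Z.1 ⊆ Z'.1), Category.comp_id] }

section AuxHomology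

/-- Naturality of `ShortComplex.mapHomologyIso` in the functor argument. -/
lemma ShortComplex.mapHomologyIso_hom_naturality_functor
    {A : Type*} {B : Type*} [Category A] [Category B] [Abelian A] [Abelian B]
    {F G : A ⥤ B} [F.Additive] [G.Additive]
    [F.PreservesHomology] [G.PreservesHomology]
    (ν : F ⟶ G) (S : ShortComplex A) :
    ShortComplex.homologyMap (S.mapNatTrans ν) ≫ (S.mapHomologyIso G).hom =
      (S.mapHomologyIso F).hom ≫ ν.app S.homology := by
  let h : S.LeftHomologyData := S.leftHomologyData
  haveI : h.IsPreservedBy F := Functor.PreservesLeftHomologyOf.isPreservedBy h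
  haveI : h.IsPreservedBy G := Functor.PreservesLeftHomologyOf.isPreservedBy h
  let γ : ShortComplex.LeftHomologyMapData (S.mapNatTrans ν) (h.map F) (h.map G) :=
    { φK := ν.app h.K
      φH := ν.app h.H
      commi := by
        simp only [ShortComplex.LeftHomologyData.map_i]
        exact (ν.naturality h.i).symm
      commf' := by
        simp only [ShortComplex.LeftHomologyData.map_f']
        exact ν.naturality h.f'
      commπ := by
        simp only [ShortComplex.LeftHomologyData.map_π]
        exact ν.naturality h.π }
  rw [γ.homologyMap_eq, ShortComplex.LeftHomologyData.mapHomologyIso_eq (hl := h) (F := F),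
    ShortComplex.LeftHomologyData.mapHomologyIso_eq (hl := h) (F := G)]
  dsimp [γ]
  simp only [Category.assoc, Iso.inv_hom_id_assoc]
  have e2 : ∀ (φ : (h.map F).H ⟶ (h.map G).H) (ψ : (h.map G).H ⟶ G.obj S.homology), φ = ν.app h.H → ψ = G.map h.homologyIso.inv → (φ ≫ (h.map G).homologyIso.inv) ≫ ((h.map G).homologyIso.hom ≫ ψ) = F.map h.homologyIso.inv ≫ ν.app S.homology := by
    intro φ ψ hφ hψ
    rw [Category.assoc, Iso.inv_hom_id_assoc, hφ, hψ]; exact (ν.naturality _).symm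
  exact (congrArg ((h.map F).homologyIso.hom ≫ ·) (e2 _ _ rfl rfl)).trans (Category.assoc _ _ _).symm

variable {J : Type u} [SmallCategory J] [IsFiltered J]

/-- The coprojection `ev_j ⟶ colim` as a natural transformation. -/
@[simps]
noncomputable def evalToColim (A : Type*) [Category A] [HasColimitsOfShape J A] (j : J) :
    (evaluation J A).obj j ⟶ colim where
  app H := colimit.ι H j
  naturality {H H'} f := by
    dsimp
    simp [colimit.ι_map]

/-- The homology functor on short complexes of abelian groups commutes with filtered
colimits. -/
noncomputable def shortComplexHomologyFunctorPreserves :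
    PreservesColimitsOfShape J (ShortComplex.homologyFunctor AddCommGrpCat.{u}) := by
  constructor
  intro G
  let S : ShortComplex (J ⥤ AddCommGrpCat.{u}) :=
    ShortComplex.mk (Functor.whiskerLeft G ShortComplex.π₁Toπ₂) (Functor.whiskerLeft G ShortComplex.π₂Toπ₃)
      (by ext j : 2; exact (G.obj j).zero)
  let cG : Cocone G :=
    { pt := S.map colim
      ι :=
        { app := fun j => S.mapNatTrans (evalToColim AddCommGrpCat.{u} j)
          naturality := fun j j' φ => by
            refine ShortComplex.hom_ext _ _ ?_ ?_ ?_
            · exact (colimit.w (G ⋙ ShortComplex.π₁) φ).trans (Category.comp_id _).symm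
            · exact (colimit.w (G ⋙ ShortComplex.π₂) φ).trans (Category.comp_id _).symm
            · exact (colimit.w (G ⋙ ShortComplex.π₃) φ).trans (Category.comp_id _).symm } }
  have hcG : IsColimit cG := by
    refine ShortComplex.isColimitOfIsColimitπ _ ?_ ?_ ?_
    · exact colimit.isColimit (G ⋙ ShortComplex.π₁)
    · exact colimit.isColimit (G ⋙ ShortComplex.π₂)
    · exact colimit.isColimit (G ⋙ ShortComplex.π₃)
  refine preservesColimit_of_preserves_colimit_cocone hcG ?_
  letI : ∀ j : J, ((evaluation J AddCommGrpCat.{u}).obj j).PreservesHomology := fun j => ⟨fun f => inferInstance, fun f => inferInstance⟩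
  let β : G ⋙ ShortComplex.homologyFunctor AddCommGrpCat.{u} ≅ S.homology :=
    NatIso.ofComponents
      (fun j => S.mapHomologyIso ((evaluation J AddCommGrpCat.{u}).obj j))
      (fun {j j'} φ =>
        ShortComplex.mapHomologyIso_hom_naturality_functor ((evaluation J _).map φ) S)
  have hc0 : IsColimit ((Cocone.precompose β.hom).obj (colimit.cocone S.homology)) :=
    (IsColimit.precomposeHomEquiv β (colimit.cocone S.homology)).symm
      (colimit.isColimit _)
  refine IsColimit.ofIsoColimit hc0 (Cocones.ext (S.mapHomologyIso colim).symm ?_)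
  intro j
  dsimp [β]
  refine (Iso.comp_inv_eq _).mpr ?_
  exact (ShortComplex.mapHomologyIso_hom_naturality_functor
    (evalToColim AddCommGrpCat.{u} j) S).symm

end AuxHomology

section Aux2
variable {J : Type u} [SmallCategory J] [IsFiltered J]

noncomputable def shortComplexFunctor'Preserves {ι' : Type*} (c : ComplexShape ι')
    (a b d : ι') :
    PreservesColimitsOfShape J
      (HomologicalComplex.shortComplexFunctor' AddCommGrpCat.{u} c a b d) := by
  constructor
  intro K
  constructor
  intro cc hcc
  constructor
  refine ShortComplex.isColimitOfIsColimitπ _ ?_ ?_ ?_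
  · exact isColimitOfPreserves (HomologicalComplex.eval _ c a) hcc
  · exact isColimitOfPreserves (HomologicalComplex.eval _ c b) hcc
  · exact isColimitOfPreserves (HomologicalComplex.eval _ c d) hcc

noncomputable def homologyFunctorPreserves {ι' : Type*} (c : ComplexShape ι') (i : ι') :
    PreservesColimitsOfShape J (HomologicalComplex.homologyFunctor AddCommGrpCat.{u} c i) := by
  haveI : PreservesColimitsOfShape J (HomologicalComplex.shortComplexFunctor AddCommGrpCat.{u} c i) :=
    shortComplexFunctor'Preserves c (c.prev i) i (c.next i)
  haveI := shortComplexHomologyFunctorPreserves (J := J)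
  exact preservesColimitsOfShape_of_natIso
    (HomologicalComplex.homologyFunctorIso AddCommGrpCat.{u} c i).symm

end Aux2

noncomputable def complexDiagram {F : Sh} (P : InjectiveResolution F) :
    QCClosed X ⥤ HomologicalComplex AddCommGrpCat.{u} (ComplexShape.up ℕ) where
  obj Z := ((Γsupp Z.toClosed).mapHomologicalComplex (ComplexShape.up ℕ)).obj P.cocomplex
  map {Z Z'} h := (NatTrans.mapHomologicalComplex (push (leOfHom h : Z.1 ⊆ Z'.1))
      (ComplexShape.up ℕ)).app P.cocomplex
  map_id Z := by
    show (NatTrans.mapHomologicalComplex (push (Z := Z.toClosed) (Z' := Z.toClosed) (leOfHom (𝟙 Z) : Z.1 ⊆ Z.1)) (ComplexShape.up ℕ)).app P.cocomplex = _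
    rw [push_id Z.toClosed, NatTrans.mapHomologicalComplex_id]
    rfl
  map_comp {Z Z' Z''} h h' := by
    show (NatTrans.mapHomologicalComplex (push (Z := Z.toClosed) (Z' := Z''.toClosed) (leOfHom (h ≫ h') : Z.1 ⊆ Z''.1)) (ComplexShape.up ℕ)).app P.cocomplex = (NatTrans.mapHomologicalComplex (push (Z := Z.toClosed) (Z' := Z'.toClosed) (leOfHom h : Z.1 ⊆ Z'.1)) (ComplexShape.up ℕ)).app P.cocomplex ≫ (NatTrans.mapHomologicalComplex (push (Z := Z'.toClosed) (Z' := Z''.toClosed) (leOfHom h' : Z'.1 ⊆ Z''.1)) (ComplexShape.up ℕ)).app P.cocomplex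
    rw [← NatTrans.comp_app, ← NatTrans.mapHomologicalComplex_comp]
    exact congrArg (fun α => (NatTrans.mapHomologicalComplex α (ComplexShape.up ℕ)).app P.cocomplex) (push_comp _ _).symm

noncomputable def complexCocone {F : Sh} (P : InjectiveResolution F) :
    Cocone (complexDiagram Γsupp push push_id push_comp P) where
  pt := (Γc.mapHomologicalComplex (ComplexShape.up ℕ)).obj P.cocomplex
  ι :=
    { app := fun Z => (NatTrans.mapHomologicalComplex (ι Z) (ComplexShape.up ℕ)).app P.cocomplex
      naturality := fun Z Z' h => by
        dsimp only [complexDiagram]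
        rw [← NatTrans.comp_app, ← NatTrans.mapHomologicalComplex_comp,
          ι_nat (leOfHom h : Z.1 ⊆ Z'.1)]
        exact (Category.comp_id _).symm }

/-- Let `k` be a field and `X` a scheme partially proper over `k`.  If
`Γ_c(X,-)` is, at the level of sections, the filtered union of the functors `Γ_Z(X,-)`
over quasi-compact closed subsets `Z` of `X` (the defining property of sections with
quasi-compact support), then for every `i` and every abelian étale sheaf `F`, the
compactly supported cohomology `H^i_c(X,F)` is the filtered colimit
`colim_Z H^i_Z(X,F)` over quasi-compact closed subsets `Z ⊆ X`. -/
theorem Hc_isColimit_of_cohomology_with_supports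
    (k : Type u) [Field k] (f : X ⟶ Spec (CommRingCat.of k)) (hpp : PartiallyProper f)
    (h0 : ∀ F : Sh, Nonempty (IsColimit (sectionsCocone Γsupp Γc push ι push_id push_comp
      (fun {Z Z'} h => ι_nat h) F)))
    (i : ℕ) (F : Sh) :
    Nonempty (IsColimit (derivedCocone Γsupp Γc push ι push_id push_comp
      (fun {Z Z'} h => ι_nat h) i F)) := by
  haveI : Nonempty (QCClosed X) := ⟨⟨∅, isClosed_empty, isCompact_empty⟩⟩
  haveI : IsDirected (QCClosed X) (· ≤ ·) :=
    ⟨fun Z Z' => ⟨⟨Z.1 ∪ Z'.1, Z.2.1.union Z'.2.1, Z.2.2.union Z'.2.2⟩,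
      Set.subset_union_left, Set.subset_union_right⟩⟩
  let P : InjectiveResolution F := InjectiveResolution.of F
  haveI := homologyFunctorPreserves (J := QCClosed X) (ComplexShape.up ℕ) i
  have hK : IsColimit (complexCocone Γsupp Γc push ι push_id push_comp
      (fun {Z Z'} h => ι_nat h) P) :=
    HomologicalComplex.isColimitOfEval _ _ (fun n => (h0 (P.cocomplex.X n)).some)
  have hH := isColimitOfPreserves
    (HomologicalComplex.homologyFunctor AddCommGrpCat.{u} (ComplexShape.up ℕ) i) hK
  let E : derivedDiagram Γsupp push push_id push_comp i F ≅
      complexDiagram Γsupp push push_id push_comp P ⋙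
        HomologicalComplex.homologyFunctor AddCommGrpCat.{u} (ComplexShape.up ℕ) i :=
    NatIso.ofComponents (fun Z => P.isoRightDerivedObj (Γsupp Z.toClosed) i)
      (fun {Z Z'} h => by
        dsimp [derivedDiagram, complexDiagram]
        rw [InjectiveResolution.rightDerived_app_eq (push (leOfHom h : Z.1 ⊆ Z'.1)) P i]
        exact congrArg ((P.isoRightDerivedObj (Γsupp Z.toClosed) i).hom ≫ ·) ((Category.assoc _ _ _).trans ((congrArg (_ ≫ ·) (P.isoRightDerivedObj (Γsupp Z'.toClosed) i).inv_hom_id).trans (Category.comp_id _))))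
  have hc1 : IsColimit ((Cocone.precompose E.hom).obj
      ((HomologicalComplex.homologyFunctor AddCommGrpCat.{u} (ComplexShape.up ℕ) i).mapCocone
        (complexCocone Γsupp Γc push ι push_id push_comp (fun {Z Z'} h => ι_nat h) P))) :=
    (IsColimit.precomposeHomEquiv E _).symm hH
  refine ⟨IsColimit.ofIsoColimit hc1 (Cocones.ext (P.isoRightDerivedObj Γc i).symm ?_)⟩
  intro Z
  dsimp [E, derivedCocone, complexCocone]
  rw [InjectiveResolution.rightDerived_app_eq (ι Z) P i]
  simp
  rfl


end
end
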